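/- arXiv:1310.0589 — 11 statements merged into one kernel-verified Lean document; each statement's English description precedes it below -/
import Mathlib

section
/- Let λ, p₀, h ∈ ℝ and let P(x) = −¼x⁴ − (2p₀²−h)x² + 2λp₀²x + 1 − (p₀²−h)² − p₀²λ². Let r : I → ℝ be a twice differentiable function on an open interval I with r′(t)² = P(r(t)) and r″(t) = ½P′(r(t)) for all t ∈ I. Then the curve t ↦ (ω₁,ω₂,ω₃,α₁,α₂,α₃)(t) = (p₀, 0, r(t), p₀² + ½r(t)² − h, r′(t), −p₀(r(t)−λ)) is an integral curve of the vector field X, i.e. the derivative of the curve equals X evaluated along the curve. -/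
/-- The Kowalevski–Yehia gyrostat vector field on ℝ⁶ = {(ω₁,ω₂,ω₃,α₁,α₂,α₃)}. -/
noncomputable def KY (lam : ℝ) (v : Fin 6 → ℝ) : Fin 6 → ℝ :=
  ![ (1/2) * v 1 * (v 2 - lam),
     (1/2) * (-(v 0) * (v 2 - lam) - v 5),
     v 4,
     v 4 * v 2 - v 5 * v 1,
     v 5 * v 0 - v 3 * v 2,
     v 3 * v 1 - v 4 * v 0 ]

/-! On the Kharlamov ansatz `ω = (p₀, 0, x)`, `α = (p₀² + x²/2 - h, y, -p₀(x - λ))` the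
components of `X` are `(0, 0, y, x y, ½ P'(x), -p₀ y)`, identically in `x` and `y`. Differentiating
the ansatz along `x = r(t)`, `y = r'(t)` gives `(0, 0, r', r r', r'', -p₀ r')`, so the two agree
exactly when `r'' = ½ P'(r)`. -/

noncomputable def kharlamovQuartic (lam p₀ h x : ℝ) : ℝ :=
  -(1/4)*x^4 - (2*p₀^2 - h)*x^2 + 2*lam*p₀^2*x + 1 - (p₀^2 - h)^2 - p₀^2*lam^2

noncomputable def kharlamovPoint (lam p₀ h x y : ℝ) : Fin 6 → ℝ :=
  ![p₀, 0, x, p₀^2 + (1/2)*x^2 - h, y, -p₀*(x - lam)]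

theorem hasDerivAt_kharlamovQuartic (lam p₀ h x : ℝ) :
    HasDerivAt (kharlamovQuartic lam p₀ h) (-x^3 - 2*(2*p₀^2 - h)*x + 2*lam*p₀^2) x := by
  have := (((((hasDerivAt_pow 4 x).const_mul (-(1/4))).sub
    ((hasDerivAt_pow 2 x).const_mul (2*p₀^2 - h))).add ((hasDerivAt_id x).const_mul (2*lam*p₀^2))
    ).add_const 1).sub_const ((p₀^2 - h)^2) |>.sub_const (p₀^2*lam^2)
  exact this.congr_deriv (by norm_num; ring)

theorem KY_kharlamovPoint (lam p₀ h x y : ℝ) :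
    KY lam (kharlamovPoint lam p₀ h x y) =
      ![0, 0, y, x*y, (1/2) * deriv (kharlamovQuartic lam p₀ h) x, -p₀*y] := by
  rw [(hasDerivAt_kharlamovQuartic lam p₀ h x).deriv]
  simp only [KY, kharlamovPoint, Matrix.cons_val, Matrix.vecCons_inj, true_and, and_true]
  refine ⟨?_, ?_, ?_, ?_, ?_⟩ <;> ring

theorem hasDerivAt_kharlamovPoint {lam p₀ h t x' y' : ℝ} {x y : ℝ → ℝ}
    (hx : HasDerivAt x x' t) (hy : HasDerivAt y y' t) :
    HasDerivAt (fun t => kharlamovPoint lam p₀ h (x t) (y t))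
      ![0, 0, x', x t * x', y', -p₀*x'] t := by
  have hα₁ : HasDerivAt (fun t => p₀^2 + (1/2)*(x t)^2 - h) (x t * x') t :=
    ((((hx.fun_pow 2).const_mul (1/2)).const_add (p₀^2)).sub_const h).congr_deriv (by norm_num; ring)
  have hα₃ : HasDerivAt (fun t => -p₀*(x t - lam)) (-p₀*x') t :=
    (hx.sub_const lam).const_mul (-p₀)
  have hnil : HasDerivAt (fun _ => (![] : Fin 0 → ℝ)) ![] t := by
    simpa using hasDerivAt_const t (![] : Fin 0 → ℝ)
  unfold kharlamovPoint
  exact (hasDerivAt_const t p₀).finCons <| (hasDerivAt_const t 0).finCons <| hx.finCons <|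
    hα₁.finCons <| hy.finCons <| hα₃.finCons hnil

theorem kharlamov_solution_is_integral_curve_general
    (lam p₀ h : ℝ)
    (P : ℝ → ℝ)
    (hP : P = fun x => -(1/4)*x^4 - (2*p₀^2 - h)*x^2 + 2*lam*p₀^2*x
        + 1 - (p₀^2 - h)^2 - p₀^2*lam^2)
    (I : Set ℝ)
    (r r' r'' : ℝ → ℝ)
    (hr : ∀ t ∈ I, HasDerivAt r (r' t) t)
    (hr' : ∀ t ∈ I, HasDerivAt r' (r'' t) t)
    (hacc : ∀ t ∈ I, r'' t = (1/2) * deriv P (r t))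
    (curve : ℝ → Fin 6 → ℝ)
    (hcurve : curve = fun t =>
      ![p₀, 0, r t, p₀^2 + (1/2)*(r t)^2 - h, r' t, -p₀*(r t - lam)]) :
    ∀ t ∈ I, HasDerivAt curve (KY lam (curve t)) t := by
  intro t ht
  have hP' : P = kharlamovQuartic lam p₀ h := hP
  have hcurve' : curve = fun t => kharlamovPoint lam p₀ h (r t) (r' t) := hcurve
  subst hP' hcurve'
  rw [KY_kharlamovPoint, ← hacc t ht]
  exact hasDerivAt_kharlamovPoint (hr t ht) (hr' t ht)

/-- the Kharlamov partial solution is an integral curve of the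
Kowalevski–Yehia field. -/
theorem kharlamov_solution_is_integral_curve
    (lam p₀ h : ℝ)
    (P : ℝ → ℝ)
    (hP : P = fun x => -(1/4)*x^4 - (2*p₀^2 - h)*x^2 + 2*lam*p₀^2*x
        + 1 - (p₀^2 - h)^2 - p₀^2*lam^2)
    (I : Set ℝ) (hI : IsOpen I)
    (r r' r'' : ℝ → ℝ)
    (hr : ∀ t ∈ I, HasDerivAt r (r' t) t)
    (hr' : ∀ t ∈ I, HasDerivAt r' (r'' t) t)
    (hsq : ∀ t ∈ I, (r' t)^2 = P (r t))
    (hacc : ∀ t ∈ I, r'' t = (1/2) * deriv P (r t))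
    (curve : ℝ → Fin 6 → ℝ)
    (hcurve : curve = fun t =>
      ![p₀, 0, r t, p₀^2 + (1/2)*(r t)^2 - h, r' t, -p₀*(r t - lam)]) :
    ∀ t ∈ I, HasDerivAt curve (KY lam (curve t)) t :=
  kharlamov_solution_is_integral_curve_general lam p₀ h P hP I r r' r'' hr hr' hacc curve hcurve
end

section
/- The Kowalevski–Yehia integral K = (ω₁²−ω₂²+α₁)² + (2ω₁ω₂+α₂)² + 2λ[(ω₃−λ)(ω₁²+ω₂²)+2ω₁α₃] is a first integral of the vector field X: for every point of ℝ⁶, the directional derivative of K along X vanishes, i.e. ⟨∇K, X⟩ = 0 identically. -/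
/-- The Kowalevski–Yehia integral K. -/
noncomputable def KYK (lam : ℝ) (v : Fin 6 → ℝ) : ℝ :=
  ((v 0)^2 - (v 1)^2 + v 3)^2 + (2*(v 0)*(v 1) + v 4)^2
    + 2*lam*((v 2 - lam)*((v 0)^2 + (v 1)^2) + 2*(v 0)*(v 5))

theorem fderiv_apply_coord {𝕜 ι : Type*} [NontriviallyNormedField 𝕜] [Fintype ι] (i : ι)
    (v : ι → 𝕜) : fderiv 𝕜 (fun w : ι → 𝕜 => w i) v = ContinuousLinearMap.proj i :=
  (hasFDerivAt_apply i v).fderiv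

namespace KowalevskiYehia

def xiRe (v : Fin 6 → ℝ) : ℝ := v 0 ^ 2 - v 1 ^ 2 + v 3

def xiIm (v : Fin 6 → ℝ) : ℝ := 2 * v 0 * v 1 + v 4

def gyroTerm (lam : ℝ) (v : Fin 6 → ℝ) : ℝ := (v 2 - lam) * (v 0 ^ 2 + v 1 ^ 2) + 2 * v 0 * v 5

@[fun_prop]
theorem differentiable_xiRe : Differentiable ℝ xiRe := by
  unfold xiRe; fun_prop

@[fun_prop]
theorem differentiable_xiIm : Differentiable ℝ xiIm := by
  unfold xiIm; fun_prop

@[fun_prop]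
theorem differentiable_gyroTerm (lam : ℝ) : Differentiable ℝ (gyroTerm lam) := by
  unfold gyroTerm; fun_prop

theorem KYK_eq (lam : ℝ) :
    KYK lam = fun v => xiRe v ^ 2 + xiIm v ^ 2 + 2 * lam * gyroTerm lam v :=
  rfl

theorem fderiv_KYK_apply (lam : ℝ) (v w : Fin 6 → ℝ) :
    fderiv ℝ (KYK lam) v w = 2 * xiRe v * fderiv ℝ xiRe v w + 2 * xiIm v * fderiv ℝ xiIm v w
      + 2 * lam * fderiv ℝ (gyroTerm lam) v w := by
  simp (disch := fun_prop) only [KYK_eq, fderiv_fun_add, fderiv_fun_pow, fderiv_const_mul]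
  simp

variable (lam : ℝ) (v : Fin 6 → ℝ)

theorem fderiv_xiRe_KY : fderiv ℝ xiRe v (KY lam v) = v 2 * xiIm v - 2 * lam * v 0 * v 1 := by
  unfold xiRe
  simp (disch := fun_prop) only [fderiv_fun_add, fderiv_fun_sub, fderiv_fun_pow, fderiv_apply_coord,
    add_apply, sub_apply, smul_apply, ContinuousLinearMap.proj_apply, nsmul_eq_mul, smul_eq_mul,
    KY, Matrix.cons_val, xiIm]
  ring

theorem fderiv_xiIm_KY :
    fderiv ℝ xiIm v (KY lam v) = -(v 2 * xiRe v) + lam * (v 0 ^ 2 - v 1 ^ 2) := by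
  unfold xiIm
  simp (disch := fun_prop) only [fderiv_fun_add, fderiv_fun_mul, fderiv_fun_const, fderiv_apply_coord,
    add_apply, smul_apply, Pi.zero_apply, zero_apply, ContinuousLinearMap.proj_apply, smul_eq_mul,
    KY, Matrix.cons_val, xiRe]
  ring

theorem fderiv_gyroTerm_KY :
    fderiv ℝ (gyroTerm lam) v (KY lam v) = (v 1 ^ 2 - v 0 ^ 2) * v 4 + 2 * v 0 * v 1 * v 3 := by
  unfold gyroTerm
  simp (disch := fun_prop) only [fderiv_fun_add, fderiv_fun_sub, fderiv_fun_mul, fderiv_fun_pow,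
    fderiv_fun_const, fderiv_apply_coord, add_apply, sub_apply, smul_apply, Pi.zero_apply, zero_apply,
    ContinuousLinearMap.proj_apply, nsmul_eq_mul, smul_eq_mul, KY, Matrix.cons_val]
  ring

end KowalevskiYehia

open KowalevskiYehia in
/-- K is a first integral of the Kowalevski–Yehia field:
its directional derivative along X vanishes identically. -/
theorem KYK_first_integral (lam : ℝ) :
    ∀ v : Fin 6 → ℝ, fderiv ℝ (KYK lam) v (KY lam v) = 0 := by
  intro v
  rw [fderiv_KYK_apply, fderiv_xiRe_KY, fderiv_xiIm_KY, fderiv_gyroTerm_KY, xiRe, xiIm]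
  ring
end

section
/- Let λ > 0, r ≠ λ, let d ∈ ℝ satisfy d² = r²(r−λ)² + 4, let V ∈ ℝ satisfy V² = (r/2)(−r + d/(r−λ)), and let ε = ±1. Then the point ξ_ε(r,λ) with coordinates ω₁ = εV, ω₂ = 0, ω₃ = r, α₁ = ½(r(r−λ)−d), α₂ = 0, α₃ = −ε(r−λ)V is a zero of the vector field X (a fixed point of the system), and moreover α₁² + α₂² + α₃² = 1. -/
/-- the points ξ_ε(r,λ) are fixed points of the Kowalevski–Yehia
system lying on the unit sphere Γ = 1. -/
theorem relative_equilibria_are_fixed_points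
    (lam r d V ε : ℝ)
    (hlam : 0 < lam) (hr : r ≠ lam)
    (hd : d^2 = r^2*(r - lam)^2 + 4)
    (hV : V^2 = (r/2)*(-r + d/(r - lam)))
    (hε : ε = 1 ∨ ε = -1)
    (ξ : Fin 6 → ℝ)
    (hξ : ξ = ![ε*V, 0, r, (1/2)*(r*(r - lam) - d), 0, -ε*(r - lam)*V]) :
    KY lam ξ = 0 ∧ (ξ 3)^2 + (ξ 4)^2 + (ξ 5)^2 = 1 := by
  have hrl : r - lam ≠ 0 := sub_ne_zero.mpr hr
  have hε2 : ε^2 = 1 := by rcases hε with h | h <;> rw [h] <;> ring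
  have hV2 : (r - lam) * V^2 = (r/2) * (-r*(r - lam) + d) := by
    rw [hV]; field_simp
  subst hξ
  refine ⟨funext fun i => ?_, ?_⟩
  · fin_cases i
    · show (1/2) * 0 * (r - lam) = 0; ring
    · show (1/2) * (-(ε*V) * (r - lam) - (-ε*(r - lam)*V)) = 0; ring
    · show (0:ℝ) = 0; rfl
    · show 0 * r - (-ε*(r - lam)*V) * 0 = 0; ring
    · show (-ε*(r - lam)*V) * (ε*V) - (1/2)*(r*(r - lam) - d) * r = 0
      linear_combination (-(V^2)*(r - lam))*hε2 - hV2
    · show (1/2)*(r*(r - lam) - d) * 0 - 0 * (ε*V) = 0; ring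
  · show ((1/2)*(r*(r - lam) - d))^2 + 0^2 + (-ε*(r - lam)*V)^2 = 1
    linear_combination (1/4)*hd + ((r - lam)^2*V^2)*hε2 + (r - lam)*hV2
end

section
/- Let λ > 0, r ∉ {0, λ}, and let d ∈ ℝ satisfy d² = r²(r−λ)² + 4 with sign(d) = sign(r(r−λ)). Then the quantity Q² := (d − r(r−λ))/(2(r−λ)) has the same sign as r, and consequently V² := (r/2)(−r + d/(r−λ)) = r·Q² is strictly positive; hence real relative equilibria exist for every r in (−∞,0) ∪ (0,λ) ∪ (λ,+∞) under this sign convention for d. -/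
/-- with the sign convention sign d = sign(r(r−λ)), the quantity
Q² = (d − r(r−λ))/(2(r−λ)) has the sign of r, hence V² = (r/2)(−r+d/(r−λ)) = r·Q²
is strictly positive, so real relative equilibria exist for every
r ∈ (−∞,0) ∪ (0,λ) ∪ (λ,+∞). -/
theorem relative_equilibria_exist
    (lam r d : ℝ)
    (hlam : 0 < lam) (hr0 : r ≠ 0) (hrlam : r ≠ lam)
    (hd : d^2 = r^2*(r - lam)^2 + 4)
    (hsign : Real.sign d = Real.sign (r*(r - lam))) :
    Real.sign ((d - r*(r - lam))/(2*(r - lam))) = Real.sign r ∧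
    (r/2)*(-r + d/(r - lam)) = r * ((d - r*(r - lam))/(2*(r - lam))) ∧
    0 < (r/2)*(-r + d/(r - lam)) := by
  have hrl : r - lam ≠ 0 := sub_ne_zero.mpr hrlam
  have hid : (r/2)*(-r + d/(r - lam)) = r * ((d - r*(r - lam))/(2*(r - lam))) := by
    field_simp; ring_nf
  have dpos : r*(r-lam) > 0 → 0 < d := by
    intro hp
    rw [Real.sign_of_pos hp] at hsign
    rcases lt_trichotomy d 0 with h | h | h
    · rw [Real.sign_of_neg h] at hsign; norm_num at hsign
    · rw [h, Real.sign_zero] at hsign; norm_num at hsign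
    · exact h
  have dneg : r*(r-lam) < 0 → d < 0 := by
    intro hp
    rw [Real.sign_of_neg hp] at hsign
    rcases lt_trichotomy d 0 with h | h | h
    · exact h
    · rw [h, Real.sign_zero] at hsign; norm_num at hsign
    · rw [Real.sign_of_pos h] at hsign; norm_num at hsign
  rcases lt_trichotomy r 0 with hr | hr | hr
  · -- r < 0, so r - lam < 0, p > 0
    have hrl' : r - lam < 0 := by linarith
    have hp : r*(r-lam) > 0 := mul_pos_of_neg_of_neg hr hrl'
    have hd0 : 0 < d := dpos hp
    have hgt : r*(r-lam) < d := by nlinarith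
    have hq : (d - r*(r - lam))/(2*(r - lam)) < 0 :=
      div_neg_of_pos_of_neg (by linarith) (by linarith)
    refine ⟨by rw [Real.sign_of_neg hq, Real.sign_of_neg hr], hid, ?_⟩
    rw [hid]; exact mul_pos_of_neg_of_neg hr hq
  · exact absurd hr hr0
  · rcases lt_trichotomy r lam with hl | hl | hl
    · -- 0 < r < lam : p < 0
      have hrl' : r - lam < 0 := by linarith
      have hp : r*(r-lam) < 0 := mul_neg_of_pos_of_neg hr hrl'
      have hd0 : d < 0 := dneg hp
      have hgt : d < r*(r-lam) := by nlinarith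
      have hq : 0 < (d - r*(r - lam))/(2*(r - lam)) :=
        div_pos_of_neg_of_neg (by linarith) (by linarith)
      refine ⟨by rw [Real.sign_of_pos hq, Real.sign_of_pos hr], hid, ?_⟩
      rw [hid]; exact mul_pos hr hq
    · exact absurd hl hrlam
    · -- r > lam : p > 0
      have hrl' : 0 < r - lam := by linarith
      have hp : r*(r-lam) > 0 := mul_pos hr hrl'
      have hd0 : 0 < d := dpos hp
      have hgt : r*(r-lam) < d := by nlinarith
      have hq : 0 < (d - r*(r - lam))/(2*(r - lam)) :=
        div_pos (by linarith) (by linarith)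
      refine ⟨by rw [Real.sign_of_pos hq, Real.sign_of_pos hr], hid, ?_⟩
      rw [hid]; exact mul_pos hr hq
end

section
/- Let λ > 0, r ≠ λ, let d ∈ ℝ satisfy d² = r²(r−λ)² + 4, let V ∈ ℝ satisfy V² = (r/2)(−r + d/(r−λ)), and set p₀ = V, h = −½r(r−λ) + (2r−λ)d/(2(r−λ)). Then r is a double root of the quartic P(x) = −¼x⁴ − (2p₀²−h)x² + 2λp₀²x + 1 − (p₀²−h)² − p₀²λ², i.e. P(r) = 0 and P′(r) = 0. -/
section RelativeEquilibrium

variable {lam r d p₀ h : ℝ}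

theorem sq_sub_energy_of_relativeEquilibrium (hr : r ≠ lam)
    (hV : p₀^2 = (r/2)*(-r + d/(r - lam)))
    (hh : h = -(1/2)*r*(r - lam) + (2*r - lam)*d/(2*(r - lam))) :
    p₀^2 - h = -(r*lam + d)/2 := by
  have hs : r - lam ≠ 0 := sub_ne_zero.mpr hr
  rw [hV, hh]
  field_simp
  ring

theorem two_mul_sq_mul_sub_of_relativeEquilibrium (hr : r ≠ lam)
    (hV : p₀^2 = (r/2)*(-r + d/(r - lam))) :
    2*p₀^2*(r - lam) = r*(-(r*(r - lam)) + d) := by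
  have hs : r - lam ≠ 0 := sub_ne_zero.mpr hr
  rw [hV]
  field_simp

theorem deriv_kharlamovQuartic_eq_zero
    (hq : p₀^2 - h = -(r*lam + d)/2) (hp : 2*p₀^2*(r - lam) = r*(-(r*(r - lam)) + d)) :
    deriv (kharlamovQuartic lam p₀ h) r = 0 := by
  rw [(hasDerivAt_kharlamovQuartic lam p₀ h r).deriv]
  linear_combination (-2*r) * hq - hp

theorem kharlamovQuartic_eq_zero (hd : d^2 = r^2*(r - lam)^2 + 4)
    (hq : p₀^2 - h = -(r*lam + d)/2) (hp : 2*p₀^2*(r - lam) = r*(-(r*(r - lam)) + d)) :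
    kharlamovQuartic lam p₀ h r = 0 := by
  unfold kharlamovQuartic
  linear_combination (-(r^2) - (p₀^2 - h) + (r*lam + d)/2) * hq - ((r - lam)/2) * hp
    - (1/4) * hd

end RelativeEquilibrium

theorem relative_equilibrium_is_double_root_general
    (lam r d V : ℝ)
    (hr : r ≠ lam)
    (hd : d^2 = r^2*(r - lam)^2 + 4)
    (hV : V^2 = (r/2)*(-r + d/(r - lam)))
    (p₀ h : ℝ)
    (hp₀ : p₀ = V)
    (hh : h = -(1/2)*r*(r - lam) + (2*r - lam)*d/(2*(r - lam)))
    (P : ℝ → ℝ)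
    (hP : P = fun x => -(1/4)*x^4 - (2*p₀^2 - h)*x^2 + 2*lam*p₀^2*x
        + 1 - (p₀^2 - h)^2 - p₀^2*lam^2) :
    P r = 0 ∧ deriv P r = 0 := by
  subst hp₀ hP
  have hq := sq_sub_energy_of_relativeEquilibrium hr hV hh
  have hp := two_mul_sq_mul_sub_of_relativeEquilibrium hr hV
  exact ⟨kharlamovQuartic_eq_zero hd hq hp, deriv_kharlamovQuartic_eq_zero hq hp⟩

/-- at a relative equilibrium of the Kowalevski–Yehia gyrostat,
with p₀ = V and h the energy value, the parameter r is a double root of the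
quartic P governing the Kharlamov partial solution. -/
theorem relative_equilibrium_is_double_root
    (lam r d V : ℝ)
    (hlam : 0 < lam) (hr : r ≠ lam)
    (hd : d^2 = r^2*(r - lam)^2 + 4)
    (hV : V^2 = (r/2)*(-r + d/(r - lam)))
    (p₀ h : ℝ)
    (hp₀ : p₀ = V)
    (hh : h = -(1/2)*r*(r - lam) + (2*r - lam)*d/(2*(r - lam)))
    (P : ℝ → ℝ)
    (hP : P = fun x => -(1/4)*x^4 - (2*p₀^2 - h)*x^2 + 2*lam*p₀^2*x
        + 1 - (p₀^2 - h)^2 - p₀^2*lam^2) :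
    P r = 0 ∧ deriv P r = 0 :=
  relative_equilibrium_is_double_root_general lam r d V hr hd hV p₀ h hp₀ hh P hP
end

section
/- Let λ > 0, r ≠ λ, and let d > 0 satisfy d² = r²(r−λ)² + 4. Then μ₂² = 0 if and only if r³(r−λ)³ = λ² and (2r−λ)(r−λ)r < 0, where μ₂² = −[(2r−λ)(r−λ)r + λd]/(2(r−λ)). -/
/-- criterion for vanishing of μ₂². -/
theorem mu2_vanishing_criterion
    (lam r d : ℝ)
    (hlam : 0 < lam) (hr : r ≠ lam)
    (hdpos : 0 < d) (hd : d^2 = r^2*(r - lam)^2 + 4) :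
    -((2*r - lam)*(r - lam)*r + lam*d)/(2*(r - lam)) = 0 ↔
      r^3*(r - lam)^3 = lam^2 ∧ (2*r - lam)*(r - lam)*r < 0 := by
  have hrl : r - lam ≠ 0 := sub_ne_zero.mpr hr
  have hden : (2:ℝ)*(r - lam) ≠ 0 := mul_ne_zero two_ne_zero hrl
  have hld : 0 < lam * d := mul_pos hlam hdpos
  rw [div_eq_zero_iff, neg_eq_zero]
  constructor
  · rintro (hN | hD)
    · have hB : (2*r - lam)*(r - lam)*r = -(lam*d) := by linarith
      have hBneg : (2*r - lam)*(r - lam)*r < 0 := by rw [hB]; linarith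
      refine ⟨?_, hBneg⟩
      have hsq : ((2*r - lam)*(r - lam)*r)^2 = (lam*d)^2 := by rw [hB]; ring
      linear_combination (1/4)*hsq + (lam^2/4)*hd
    · exact absurd hD hden
  · rintro ⟨hcube, hBneg⟩
    left
    have hsq : (lam*d)^2 = ((2*r - lam)*(r - lam)*r)^2 := by
      linear_combination lam^2*hd - 4*hcube
    have h2 : (lam*d + (2*r - lam)*(r - lam)*r) * (lam*d - (2*r - lam)*(r - lam)*r) = 0 := by
      linear_combination hsq
    have h3 : lam*d - (2*r - lam)*(r - lam)*r > 0 := by linarith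
    rcases mul_eq_zero.mp h2 with h | h
    · linarith
    · linarith
end

section
/- Let σ ∈ (−(4/3)^{1/4}, 0) ∪ ((4/3)^{1/4}, √2], and set r = (σ⁴−4)/(2σ³), λ = (3σ⁴−4)/(2σ³), d = (σ⁴+4)/(2σ²). Then λ > 0, λ − r = σ (so r ≠ λ), d > 0, d² = r²(r−λ)² + 4, (r−λ)³(3r−λ) = 4, and μ₁² = −¼[(2r−λ)(r−λ) − d] = 0. -/
/-- the parametrization of the degeneracy curves π₂₃ and π₃₁ lands
in the admissible region and makes μ₁² vanish. -/
theorem pi23_pi31_parametrization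
    (σ : ℝ)
    (hσ : σ ∈ Set.Ioo (-((4/3:ℝ)^((1:ℝ)/4))) 0 ∪
          Set.Ioc ((4/3:ℝ)^((1:ℝ)/4)) (Real.sqrt 2))
    (r lam d : ℝ)
    (hr : r = (σ^4 - 4)/(2*σ^3))
    (hlam : lam = (3*σ^4 - 4)/(2*σ^3))
    (hd : d = (σ^4 + 4)/(2*σ^2)) :
    0 < lam ∧ lam - r = σ ∧ 0 < d ∧
    d^2 = r^2*(r - lam)^2 + 4 ∧
    (r - lam)^3*(3*r - lam) = 4 ∧
    -(1/4)*((2*r - lam)*(r - lam) - d) = 0 := by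
  have hc : ((4/3:ℝ)^((1:ℝ)/4))^(4:ℕ) = 4/3 := by
    rw [← Real.rpow_natCast ((4/3:ℝ)^((1:ℝ)/4)) 4, ← Real.rpow_mul (by norm_num)]
    norm_num
  have hσne : σ ≠ 0 := by
    rcases hσ with ⟨_, h2⟩ | ⟨h1, _⟩
    · exact ne_of_lt h2
    · have : (0:ℝ) < (4/3:ℝ)^((1:ℝ)/4) := Real.rpow_pos_of_pos (by norm_num) _
      exact ne_of_gt (lt_trans this h1)
  have hlampos : 0 < lam := by
    rw [hlam]
    rcases hσ with ⟨h1, h2⟩ | ⟨h1, _⟩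
    · -- σ negative: numerator < 0, denominator < 0
      have hσ4 : σ^4 < 4/3 := by
        have : (-σ)^(4:ℕ) < ((4/3:ℝ)^((1:ℝ)/4))^(4:ℕ) := by
          apply pow_lt_pow_left₀ (by linarith) (by linarith)
          norm_num
        rw [hc] at this; nlinarith [this]
      have hσ3 : σ^3 < 0 := by nlinarith [sq_nonneg σ, mul_pos (mul_pos (neg_pos.mpr h2) (neg_pos.mpr h2)) (neg_pos.mpr h2)]
      apply div_pos_of_neg_of_neg <;> nlinarith
    · -- σ positive
      have hσpos : (0:ℝ) < σ :=
        lt_trans (Real.rpow_pos_of_pos (by norm_num) _) h1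
      have hσ4 : 4/3 < σ^4 := by
        have : ((4/3:ℝ)^((1:ℝ)/4))^(4:ℕ) < σ^(4:ℕ) := by
          apply pow_lt_pow_left₀ h1 (le_of_lt (Real.rpow_pos_of_pos (by norm_num) _))
          norm_num
        rw [hc] at this; nlinarith [this]
      have hσ3 : 0 < σ^3 := by positivity
      apply div_pos <;> nlinarith
  have hσ2 : (0:ℝ) < σ^2 := by positivity
  refine ⟨hlampos, ?_, ?_, ?_, ?_, ?_⟩
  · rw [hlam, hr]; field_simp; ring
  · rw [hd]; positivity
  · rw [hd, hr, hlam]; field_simp; ring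
  · rw [hr, hlam]; field_simp; ring
  · rw [hd, hr, hlam]; field_simp; ring
end

section
/- Let λ > 0 and set r = ½(λ − √(λ² + 4λ^{2/3})). Then r < 0, r is the unique negative real number satisfying r(r−λ) = λ^{2/3}, and, with d = √(r²(r−λ)² + 4) > 0, one has μ₂² = −[(2r−λ)(r−λ)r + λd]/(2(r−λ)) = 0. -/
/-- the curve π₂₄: r = ½(λ − √(λ²+4λ^{2/3})) is the unique
negative solution of r(r−λ) = λ^{2/3}, and on it μ₂² vanishes. -/
theorem pi24_curve
    (lam r d : ℝ)
    (hlam : 0 < lam)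
    (hr : r = (lam - Real.sqrt (lam^2 + 4*lam^((2:ℝ)/3)))/2)
    (hd : d = Real.sqrt (r^2*(r - lam)^2 + 4)) :
    r < 0 ∧
    r*(r - lam) = lam^((2:ℝ)/3) ∧
    (∀ r' : ℝ, r' < 0 → r'*(r' - lam) = lam^((2:ℝ)/3) → r' = r) ∧
    0 < d ∧
    -((2*r - lam)*(r - lam)*r + lam*d)/(2*(r - lam)) = 0 := by
  set p : ℝ := lam^((2:ℝ)/3) with hp
  have hppos : 0 < p := Real.rpow_pos_of_pos hlam _
  have hpcube : p^3 = lam^2 := by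
    rw [hp, ← Real.rpow_natCast (lam^((2:ℝ)/3)) 3, ← Real.rpow_mul hlam.le]
    norm_num
  set s : ℝ := Real.sqrt (lam^2 + 4*p) with hs
  have hsnn : 0 ≤ s := Real.sqrt_nonneg _
  have hssq : s^2 = lam^2 + 4*p := Real.sq_sqrt (by positivity)
  have hslam : lam < s := by nlinarith
  have hrneg : r < 0 := by rw [hr]; linarith
  have hkey : r*(r - lam) = p := by rw [hr]; nlinarith
  have hrp : r^2*(r - lam)^2 + 4 = p^2 + 4 := by nlinarith
  have hdval : d = Real.sqrt (p^2 + 4) := by rw [hd, hrp]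
  have hdpos : 0 < d := by rw [hdval]; positivity
  have hdsq : d^2 = p^2 + 4 := by rw [hdval]; exact Real.sq_sqrt (by positivity)
  have hlamd : lam * d = s * p := by nlinarith [mul_pos hlam hdpos, mul_nonneg hsnn hppos.le]
  refine ⟨hrneg, hkey, ?_, hdpos, ?_⟩
  · intro r' hr'neg hr'
    have hroot : (r' - r) * (r' - (lam + s)/2) = 0 := by
      have h2 : 2*r - lam = -s := by rw [hr]; ring
      nlinarith
    rcases mul_eq_zero.mp hroot with h | h
    · linarith
    · exfalso; nlinarith
  · have h2 : 2*r - lam = -s := by rw [hr]; ring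
    have hnum : (2*r - lam)*(r - lam)*r + lam*d = 0 := by
      rw [h2, hlamd]; linear_combination (-s) * hkey
    rw [hnum]; simp
end

section
/- Let λ > 0, r < 0, and let d > 0 satisfy d² = r²(r−λ)² + 4. Then Q² := (d − r(r−λ))/(2(r−λ)) equals −λ if and only if 1 + λ(r−λ)³ = 0. Moreover, for 0 < λ < 1 the unique negative r with 1 + λ(r−λ)³ = 0 is r = λ − λ^{−1/3}, and at λ = 2^{−3/4} this value satisfies λ − λ^{−1/3} = −λ, so the curve {1+λ(r−λ)³=0} meets the line {r=−λ} at the point r = −2^{−3/4}, λ = 2^{−3/4}. -/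
/-- strong degeneracy criterion Q² = −λ ⟺ 1+λ(r−λ)³ = 0 (the
curve π₂₁); for 0<λ<1 the unique negative solution is r = λ − λ^{−1/3}, and at
λ = 2^{−3/4} the curve π₂₁ meets the line r = −λ. -/
theorem pi21_strong_degeneracy
    (lam r d : ℝ)
    (hlam : 0 < lam) (hr : r < 0)
    (hdpos : 0 < d) (hd : d^2 = r^2*(r - lam)^2 + 4) :
    ((d - r*(r - lam))/(2*(r - lam)) = -lam ↔ 1 + lam*(r - lam)^3 = 0) ∧
    (lam < 1 →
      (lam - lam^(-(1:ℝ)/3) < 0 ∧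
       (1 + lam*(r - lam)^3 = 0 ↔ r = lam - lam^(-(1:ℝ)/3)))) ∧
    (lam = (2:ℝ)^(-(3:ℝ)/4) → lam - lam^(-(1:ℝ)/3) = -lam) := by
  have hs : r - lam < 0 := by linarith
  have hs2 : (2:ℝ)*(r - lam) ≠ 0 := by nlinarith
  have hcube : (lam ^ (-(1:ℝ)/3)) ^ (3:ℕ) = lam⁻¹ := by
    rw [← Real.rpow_natCast (lam ^ (-(1:ℝ)/3)) 3, ← Real.rpow_mul hlam.le]
    norm_num [Real.rpow_neg_one]
  have hcpos : 0 < lam ^ (-(1:ℝ)/3) := Real.rpow_pos_of_pos hlam _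
  refine ⟨?_, ?_, ?_⟩
  · rw [div_eq_iff hs2]
    constructor
    · intro h
      have hd' : d = (r - 2*lam) * (r - lam) := by linarith
      have : ((r - 2*lam) * (r - lam))^2 = r^2*(r - lam)^2 + 4 := by
        rw [← hd']; exact hd
      nlinarith [sq_nonneg (r - lam)]
    · intro h
      have key : d^2 = ((r - 2*lam) * (r - lam))^2 := by nlinarith
      have hpos : 0 < (r - 2*lam) * (r - lam) := by nlinarith
      have : d = (r - 2*lam) * (r - lam) := by nlinarith
      linarith [this]
  · intro hlt
    have hgt : 1 < lam ^ (-(1:ℝ)/3) := by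
      have : lam ^ (0:ℝ) < lam ^ (-(1:ℝ)/3) :=
        Real.rpow_lt_rpow_of_exponent_gt hlam hlt (by norm_num)
      simpa using this
    constructor
    · linarith
    · constructor
      · intro h
        have h3 : (r - lam)^3 = (-(lam ^ (-(1:ℝ)/3)))^3 := by
          have : (lam ^ (-(1:ℝ)/3)) ^ (3:ℕ) = lam⁻¹ := hcube
          have hne : lam ≠ 0 := hlam.ne'
          field_simp at this ⊢
          nlinarith [this]
        have := Odd.strictMono_pow (R := ℝ) (⟨1, by norm_num⟩ : Odd 3) |>.injective h3
        linarith [this]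
      · intro h
        subst h
        have hne : lam ≠ 0 := hlam.ne'
        have : (lam ^ (-(1:ℝ)/3)) ^ (3:ℕ) = lam⁻¹ := hcube
        field_simp at this
        ring_nf
        nlinarith [this]
  · intro h
    subst h
    have e1 : ((2:ℝ) ^ (-(3:ℝ)/4)) ^ (-(1:ℝ)/3) = (2:ℝ) ^ ((1:ℝ)/4) := by
      rw [← Real.rpow_mul (by norm_num : (0:ℝ) ≤ 2)]
      norm_num
    have e2 : (2:ℝ) ^ ((1:ℝ)/4) = 2 * (2:ℝ) ^ (-(3:ℝ)/4) := by
      rw [show (1:ℝ)/4 = 1 + (-(3:ℝ)/4) by norm_num,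
        Real.rpow_add (by norm_num : (0:ℝ) < 2), Real.rpow_one]
    rw [e1, e2]; ring
end

section
/- Let λ > 0, 0 ≤ r < λ, and d = −√(r²(r−λ)² + 4). Then μ₁² = −¼[(2r−λ)(r−λ) − d] < 0 and μ₂² = −[(2r−λ)(r−λ)r + λd]/(2(r−λ)) < 0. (Hence every relative equilibrium with parameters in the region δ₁ has two pairs of purely imaginary characteristic roots, i.e. is of center-center type and is stable in all variables.) -/
/-- in the region δ₁ (0 ≤ r < λ, d < 0) both squared eigenvalues
are negative: the relative equilibria are of center-center type, stable in all
variables. -/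
theorem delta1_center_center
    (lam r d : ℝ)
    (hlam : 0 < lam) (hr0 : 0 ≤ r) (hrlam : r < lam)
    (hd : d = -Real.sqrt (r^2*(r - lam)^2 + 4)) :
    -(1/4)*((2*r - lam)*(r - lam) - d) < 0 ∧
    -((2*r - lam)*(r - lam)*r + lam*d)/(2*(r - lam)) < 0 := by
  set s := Real.sqrt (r^2*(r - lam)^2 + 4) with hsdef
  have hnn : (0:ℝ) ≤ r^2*(r - lam)^2 + 4 := by positivity
  have hs2 : s^2 = r^2*(r - lam)^2 + 4 := Real.sq_sqrt hnn
  have hs0 : 0 < s := Real.sqrt_pos.mpr (by positivity)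
  constructor
  · -- need (2r-λ)(r-λ) + s > 0
    rw [hd]
    have key : 0 < (2*r - lam)*(r - lam) + s := by
      rcases le_or_gt (2*r) lam with h | h
      · have h2 : (0:ℝ) ≤ (lam - 2*r)*(lam - r) :=
          mul_nonneg (by linarith) (by linarith)
        nlinarith [h2]
      · nlinarith [sq_nonneg ((2*r - lam)*(r - lam) + s), sq_nonneg (r - lam),
          mul_pos (mul_pos (sub_pos.mpr hrlam) (sub_pos.mpr hrlam)) (sub_pos.mpr hrlam),
          mul_pos hs0 hs0]
    nlinarith [key]
  · rw [hd]
    have hden : 2*(r - lam) < 0 := by linarith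
    have hnum : 0 < -((2*r - lam)*(r - lam)*r + lam*(-s)) := by
      -- need (2r-λ)(r-λ)r < λ s ; holds since λ²s² - (rA)² = 4λ² + 4r³(λ-r)³ > 0
      have hls : 0 < lam * s := mul_pos hlam hs0
      nlinarith [sq_nonneg ((2*r - lam)*(r - lam)*r + lam*s),
        mul_nonneg (mul_nonneg (mul_nonneg hr0 hr0) hr0)
          (mul_nonneg (mul_nonneg (le_of_lt (sub_pos.mpr hrlam)) (le_of_lt (sub_pos.mpr hrlam))) (le_of_lt (sub_pos.mpr hrlam))),
        mul_pos hlam hlam, hls]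
    exact div_neg_of_pos_of_neg hnum hden
end

section
/- Let λ > 0, r > λ, and d = √(r²(r−λ)² + 4). Then μ₂² = −[(2r−λ)(r−λ)r + λd]/(2(r−λ)) < 0, and μ₁² = −¼[(2r−λ)(r−λ) − d] satisfies: μ₁² > 0 if and only if (r−λ)³(3r−λ) < 4, and μ₁² < 0 if and only if (r−λ)³(3r−λ) > 4. (Hence in the region δ₃₁ the relative equilibria are of saddle-center type and in δ₃₂ of center-center type.) -/
/-- in the region δ₃ (r > λ, d > 0) one has μ₂² < 0, while the
sign of μ₁² is determined by the curve π₃₁: (r−λ)³(3r−λ) = 4. -/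
theorem delta3_types
    (lam r d : ℝ)
    (hlam : 0 < lam) (hr : lam < r)
    (hd : d = Real.sqrt (r^2*(r - lam)^2 + 4)) :
    -((2*r - lam)*(r - lam)*r + lam*d)/(2*(r - lam)) < 0 ∧
    (0 < -(1/4)*((2*r - lam)*(r - lam) - d) ↔ (r - lam)^3*(3*r - lam) < 4) ∧
    (-(1/4)*((2*r - lam)*(r - lam) - d) < 0 ↔ 4 < (r - lam)^3*(3*r - lam)) := by
  have hs : 0 < r - lam := by linarith
  have hdpos : 0 < d := by
    rw [hd]; exact Real.sqrt_pos.mpr (by positivity)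
  have hdd : d^2 = r^2*(r - lam)^2 + 4 := by
    rw [hd]; exact Real.sq_sqrt (by positivity)
  have hA : 0 < (2*r - lam)*(r - lam) := by nlinarith
  refine ⟨?_, ⟨?_, ?_⟩, ⟨?_, ?_⟩⟩
  · apply div_neg_of_neg_of_pos
    · nlinarith [mul_pos hA (by linarith : (0:ℝ) < r), mul_pos hlam hdpos]
    · linarith
  · intro h
    nlinarith [mul_pos hdpos hdpos, mul_pos hA hA, mul_pos hdpos hA]
  · intro h
    nlinarith [mul_pos hdpos hdpos, mul_pos hA hA, mul_pos hdpos hA]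
  · intro h
    nlinarith [mul_pos hdpos hdpos, mul_pos hA hA, mul_pos hdpos hA]
  · intro h
    nlinarith [mul_pos hdpos hdpos, mul_pos hA hA, mul_pos hdpos hA]
end
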